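/- Let q ≥ 3 be an integer, and let d and t be integers with t even, t ≥ 2, and 5t ≤ 2d + 1. Set γ := 2 if q = 3 and γ := 1 + 2q^{−1} if q ≥ 4, and define ψ^even := q^{(3/4)t²} · Σ_{i=1}^{t/2−1} q^{(t/2−1−i)(t/2−i)} · C_q(d−2t+1, t/2−i) · C_q(t/2−1, i). Then ψ^even ≤ q^{(3/4)t² + (t/2)(d−2t) − (d − (5/2)t + 2)} · γ²/(1 − q^{−2}). -/

import Mathlib

/-- The Gaussian binomial coefficient `C_q(n,k)` for a real `q > 1` and integers `n, k`:
`∏_{i=1}^{k} (q^{n−i+1} − 1)/(q^i − 1)` if `0 ≤ k ≤ n`, and `0` otherwise. -/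
noncomputable def gaussBinom (q : ℝ) (n k : ℤ) : ℝ :=
  if 0 ≤ k ∧ k ≤ n then
    ∏ i ∈ Finset.Icc (1 : ℤ) k, (q ^ (n - i + 1) - 1) / (q ^ i - 1)
  else 0

/-- `γ := 2` if `q = 3`, and `γ := 1 + 2q⁻¹` if `q ≥ 4`. -/
noncomputable def gammaQ (q : ℕ) : ℝ := if q = 3 then 2 else 1 + 2 * (q : ℝ)⁻¹

lemma Icc_succ_top' (a m : ℤ) (h : a ≤ m + 1) :
    Finset.Icc a (m + 1) = insert (m + 1) (Finset.Icc a m) := by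
  ext x; simp only [Finset.mem_Icc, Finset.mem_insert]; omega

lemma geom_eq' (c : ℝ) (hc : c ≠ 0) (hc1 : c ≠ 1) :
    ∀ m : ℤ, 0 ≤ m → ∑ i ∈ Finset.Icc (1:ℤ) m, c ^ (i - 1) = (1 - c ^ m) / (1 - c) := by
  refine Int.le_induction ?_ ?_
  · simp
  · intro m hm ih
    rw [Icc_succ_top' 1 m (by omega), Finset.sum_insert (by simp), ih]
    have h1c : (1 : ℝ) - c ≠ 0 := by intro h; apply hc1; linarith
    field_simp
    rw [zpow_add₀ hc m 1]
    rw [zpow_one]; ring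

lemma geom_le' (c : ℝ) (hc0 : 0 < c) (hc1 : c < 1) (m : ℤ) (hm : 0 ≤ m) :
    ∑ i ∈ Finset.Icc (1:ℤ) m, c ^ (i - 1) ≤ 1 / (1 - c) := by
  rw [geom_eq' c hc0.ne' hc1.ne m hm]
  have hcm : (0:ℝ) ≤ c ^ m := by positivity
  have h1c : (0:ℝ) < 1 - c := by linarith
  gcongr
  linarith

lemma sum_inv_zpow_le (Q : ℝ) (hQ : 3 ≤ Q) (m : ℤ) (hm : 0 ≤ m) :
    ∑ i ∈ Finset.Icc (1:ℤ) m, Q⁻¹ ^ i ≤ 1 / (Q - 1) := by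
  have hQi0 : (0:ℝ) < Q⁻¹ := by positivity
  have hQi1 : Q⁻¹ < 1 := by rw [inv_lt_one_iff₀]; right; linarith
  have hQ0 : Q ≠ 0 := by linarith
  have hQ1 : Q - 1 ≠ 0 := by intro h; linarith
  calc ∑ i ∈ Finset.Icc (1:ℤ) m, Q⁻¹ ^ i
      = Q⁻¹ * ∑ i ∈ Finset.Icc (1:ℤ) m, Q⁻¹ ^ (i - 1) := by
        rw [Finset.mul_sum]
        refine Finset.sum_congr rfl fun i hi => ?_
        calc Q⁻¹ ^ i = Q⁻¹ ^ (1 + (i - 1)) := by congr 1; ring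
          _ = Q⁻¹ * Q⁻¹ ^ (i - 1) := by rw [zpow_add₀ hQi0.ne', zpow_one]
    _ ≤ Q⁻¹ * (1 / (1 - Q⁻¹)) :=
        mul_le_mul_of_nonneg_left (geom_le' Q⁻¹ hQi0 hQi1 m hm) hQi0.le
    _ = 1 / (Q - 1) := by
        rw [show (1:ℝ) - Q⁻¹ = (Q - 1) / Q by field_simp]
        field_simp

lemma prod_one_sub_ge (Q : ℝ) (hQ : 3 ≤ Q) :
    ∀ m : ℤ, 0 ≤ m → (Q - 2) / (Q - 1) ≤ ∏ i ∈ Finset.Icc (1:ℤ) m, (1 - Q⁻¹ ^ i) := by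
  have hQi0 : (0:ℝ) < Q⁻¹ := by positivity
  have hQi1 : Q⁻¹ < 1 := by rw [inv_lt_one_iff₀]; right; linarith
  have key : ∀ m : ℤ, 0 ≤ m →
      1 - ∑ i ∈ Finset.Icc (1:ℤ) m, Q⁻¹ ^ i ≤ ∏ i ∈ Finset.Icc (1:ℤ) m, (1 - Q⁻¹ ^ i) := by
    refine Int.le_induction ?_ ?_
    · simp
    · intro m hm ih
      have hsum_nonneg : (0:ℝ) ≤ ∑ i ∈ Finset.Icc (1:ℤ) m, Q⁻¹ ^ i :=
        Finset.sum_nonneg fun i _ => by positivity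
      have hc : Q⁻¹ ^ (m+1) ≤ 1 := zpow_le_one₀ hQi0 hQi1.le (by omega)
      have hc0 : (0:ℝ) < Q⁻¹ ^ (m+1) := by positivity
      have hsum_le := sum_inv_zpow_le Q hQ m hm
      have h1 : (0:ℝ) ≤ 1 - ∑ i ∈ Finset.Icc (1:ℤ) m, Q⁻¹ ^ i := by
        have : (1:ℝ)/(Q-1) ≤ 1/2 := by
          apply one_div_le_one_div_of_le <;> linarith
        linarith
      rw [Icc_succ_top' 1 m (by omega), Finset.prod_insert (by simp),
        Finset.sum_insert (by simp)]
      calc 1 - (Q⁻¹ ^ (m+1) + ∑ i ∈ Finset.Icc (1:ℤ) m, Q⁻¹ ^ i)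
          ≤ (1 - Q⁻¹ ^ (m+1)) * (1 - ∑ i ∈ Finset.Icc (1:ℤ) m, Q⁻¹ ^ i) := by nlinarith
        _ ≤ (1 - Q⁻¹ ^ (m+1)) * ∏ i ∈ Finset.Icc (1:ℤ) m, (1 - Q⁻¹ ^ i) :=
            mul_le_mul_of_nonneg_left ih (by linarith)
  intro m hm
  refine le_trans ?_ (key m hm)
  have := sum_inv_zpow_le Q hQ m hm
  have hQ1 : Q - 1 ≠ 0 := by intro h; linarith
  have h2 : (Q-2)/(Q-1) = 1 - 1/(Q-1) := by field_simp; ring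
  linarith

lemma prod_zpow_eq (Q : ℝ) (hQ : Q ≠ 0) (s : Finset ℤ) (f : ℤ → ℤ) :
    ∏ i ∈ s, Q ^ f i = Q ^ (∑ i ∈ s, f i) := by
  induction s using Finset.induction with
  | empty => simp
  | insert a s hx ih =>
    rw [Finset.prod_insert hx, Finset.sum_insert hx, ih, zpow_add₀ hQ]

lemma sum_exponents (n : ℤ) : ∀ k : ℤ, 0 ≤ k →
    ∑ i ∈ Finset.Icc (1:ℤ) k, (n - 2*i + 1) = k * (n - k) := by
  refine Int.le_induction ?_ ?_
  · simp
  · intro k hk ih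
    rw [Icc_succ_top' 1 k (by omega), Finset.sum_insert (by simp), ih]
    ring

lemma gaussBinom_nonneg (Q : ℝ) (hQ : 1 ≤ Q) (n k : ℤ) : 0 ≤ gaussBinom Q n k := by
  unfold gaussBinom
  split
  · next h =>
    refine Finset.prod_nonneg fun i hi => ?_
    rw [Finset.mem_Icc] at hi
    have h1 : (1:ℝ) ≤ Q ^ (n - i + 1) := one_le_zpow₀ hQ (by omega)
    have h2 : (1:ℝ) ≤ Q ^ i := one_le_zpow₀ hQ (by omega)
    exact div_nonneg (by linarith) (by linarith)
  · exact le_refl _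

lemma gaussBinom_le (Q : ℝ) (hQ : 3 ≤ Q) (n k : ℤ) :
    gaussBinom Q n k ≤ (Q - 1) / (Q - 2) * Q ^ (k * (n - k)) := by
  have hQ0 : (0:ℝ) < Q := by linarith
  have hC : (0:ℝ) < (Q - 1) / (Q - 2) := by apply div_pos <;> linarith
  unfold gaussBinom
  split
  · next h =>
    obtain ⟨hk0, hkn⟩ := h
    have hprodpos : (0:ℝ) < ∏ i ∈ Finset.Icc (1:ℤ) k, (1 - Q⁻¹ ^ i) :=
      lt_of_lt_of_le (by apply div_pos <;> linarith) (prod_one_sub_ge Q hQ k hk0)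
    calc ∏ i ∈ Finset.Icc (1:ℤ) k, (Q ^ (n - i + 1) - 1) / (Q ^ i - 1)
        ≤ ∏ i ∈ Finset.Icc (1:ℤ) k, (Q ^ (n - 2*i + 1) * (1 - Q⁻¹ ^ i)⁻¹) := by
          refine Finset.prod_le_prod (fun i hi => ?_) (fun i hi => ?_)
          · rw [Finset.mem_Icc] at hi
            have h1 : (1:ℝ) ≤ Q ^ (n - i + 1) := one_le_zpow₀ (by linarith) (by omega)
            have h2 : (1:ℝ) ≤ Q ^ i := one_le_zpow₀ (by linarith) (by omega)
            exact div_nonneg (by linarith) (by linarith)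
          · rw [Finset.mem_Icc] at hi
            have h2 : (1:ℝ) < Q ^ i := one_lt_zpow₀ (by linarith) (by omega)
            have hden : (0:ℝ) < Q ^ i - 1 := by linarith
            have hQi : (0:ℝ) < Q ^ i := by positivity
            have e1 : (1 - Q⁻¹ ^ i)⁻¹ = Q ^ i / (Q ^ i - 1) := by
              rw [inv_zpow, show (1:ℝ) - (Q ^ i)⁻¹ = (Q ^ i - 1) / Q ^ i by field_simp,
                inv_div]
            have e2 : Q ^ (n - 2*i + 1) * Q ^ i = Q ^ (n - i + 1) := by
              rw [← zpow_add₀ hQ0.ne']; congr 1; ring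
            rw [e1, ← mul_div_assoc, e2]
            gcongr
            linarith
      _ = (∏ i ∈ Finset.Icc (1:ℤ) k, Q ^ (n - 2*i + 1)) *
            (∏ i ∈ Finset.Icc (1:ℤ) k, (1 - Q⁻¹ ^ i))⁻¹ := by
          rw [Finset.prod_mul_distrib, Finset.prod_inv_distrib]
      _ = Q ^ (k * (n - k)) * (∏ i ∈ Finset.Icc (1:ℤ) k, (1 - Q⁻¹ ^ i))⁻¹ := by
          rw [prod_zpow_eq Q hQ0.ne', sum_exponents n k hk0]
      _ ≤ Q ^ (k * (n - k)) * ((Q - 2) / (Q - 1))⁻¹ := by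
          refine mul_le_mul_of_nonneg_left ?_ (zpow_nonneg hQ0.le _)
          exact inv_anti₀ (by apply div_pos <;> linarith) (prod_one_sub_ge Q hQ k hk0)
      _ = (Q - 1) / (Q - 2) * Q ^ (k * (n - k)) := by rw [inv_div]; ring
  · positivity

lemma gammaQ_pos (q : ℕ) : 0 < gammaQ q := by
  unfold gammaQ
  split
  · norm_num
  · positivity

lemma gammaQ_ge (q : ℕ) (hq : 3 ≤ q) : ((q:ℝ) - 1) / ((q:ℝ) - 2) ≤ gammaQ q := by
  have hq3 : (3:ℝ) ≤ (q:ℝ) := by exact_mod_cast hq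
  unfold gammaQ
  split
  · next h => subst h; norm_num
  · next h =>
    have hq4 : 4 ≤ q := by omega
    have hq4' : (4:ℝ) ≤ (q:ℝ) := by exact_mod_cast hq4
    have hq0 : (0:ℝ) < (q:ℝ) := by linarith
    have hinv : (q:ℝ)⁻¹ * (q:ℝ) = 1 := inv_mul_cancel₀ hq0.ne'
    rw [div_le_iff₀ (show (0:ℝ) < (q:ℝ) - 2 by linarith)]
    nlinarith [hinv]

theorem stmt13 (q : ℕ) (hq : 3 ≤ q) (d t : ℤ) (ht : Even t) (ht2 : 2 ≤ t)
    (htd : 5 * t ≤ 2 * d + 1) :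
    (q : ℝ) ^ ((3 / 4 : ℝ) * (t : ℝ) ^ 2) *
        ∑ i ∈ Finset.Icc (1 : ℤ) (t / 2 - 1),
          (q : ℝ) ^ ((t / 2 - 1 - i) * (t / 2 - i)) *
            gaussBinom (q : ℝ) (d - 2 * t + 1) (t / 2 - i) *
            gaussBinom (q : ℝ) (t / 2 - 1) i
      ≤ (q : ℝ) ^ ((3 / 4 : ℝ) * (t : ℝ) ^ 2 + (t : ℝ) / 2 * ((d : ℝ) - 2 * (t : ℝ))
            - ((d : ℝ) - (5 / 2 : ℝ) * (t : ℝ) + 2)) *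
          gammaQ q ^ 2 / (1 - (q : ℝ) ^ (-2 : ℤ)) := by
  obtain ⟨s, rfl⟩ : ∃ s, t = 2 * s := by
    obtain ⟨r, hr⟩ := ht; exact ⟨r, by omega⟩
  have hs1 : 1 ≤ s := by omega
  have hd : 5 * s ≤ d := by omega
  have hq3 : (3:ℝ) ≤ (q:ℝ) := by exact_mod_cast hq
  set Q : ℝ := (q:ℝ) with hQdef
  have hQ0 : (0:ℝ) < Q := by linarith
  have hQ1 : (1:ℝ) < Q := by linarith
  have hdiv : (2*s)/2 = s := Int.mul_ediv_cancel_left s two_ne_zero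
  rw [hdiv]
  set e1 : ℤ := s * (d - 4*s) - (d - 5*s + 2) with he1
  have hL : Q ^ ((3/4:ℝ) * ((2*s : ℤ):ℝ)^2) = Q ^ (3*s^2 : ℤ) := by
    rw [← Real.rpow_intCast Q (3*s^2)]
    congr 1
    push_cast; ring
  have hR : Q ^ ((3/4:ℝ) * ((2*s : ℤ):ℝ)^2 + ((2*s : ℤ):ℝ)/2 * ((d:ℝ) - 2*((2*s : ℤ):ℝ))
        - ((d:ℝ) - (5/2:ℝ)*((2*s : ℤ):ℝ) + 2)) = Q ^ (3*s^2 + e1 : ℤ) := by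
    rw [← Real.rpow_intCast Q (3*s^2 + e1)]
    congr 1
    rw [he1]; push_cast; ring
  rw [hL, hR]
  have hc : (0:ℝ) < Q ^ (-2:ℤ) := by positivity
  have hc1 : Q ^ (-2:ℤ) < 1 := by
    rw [zpow_neg]
    rw [inv_lt_one_iff₀]; right
    exact one_lt_zpow₀ hQ1 (by norm_num)
  have hgpos := gammaQ_pos q
  have key : ∑ i ∈ Finset.Icc (1:ℤ) (s - 1),
      Q ^ ((s - 1 - i) * (s - i)) * gaussBinom Q (d - 2*(2*s) + 1) (s - i) *
        gaussBinom Q (s - 1) i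
      ≤ Q ^ e1 * gammaQ q ^ 2 / (1 - Q ^ (-2:ℤ)) := by
    have hterm : ∀ i ∈ Finset.Icc (1:ℤ) (s - 1),
        Q ^ ((s - 1 - i) * (s - i)) * gaussBinom Q (d - 2*(2*s) + 1) (s - i) *
          gaussBinom Q (s - 1) i
          ≤ (gammaQ q ^ 2 * Q ^ e1) * (Q ^ (-2:ℤ)) ^ (i - 1) := by
      intro i hi
      rw [Finset.mem_Icc] at hi
      have hb1 := gaussBinom_le Q hq3 (d - 2*(2*s) + 1) (s - i)
      have hb2 := gaussBinom_le Q hq3 (s - 1) i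
      have hn1 := gaussBinom_nonneg Q hQ1.le (d - 2*(2*s) + 1) (s - i)
      have hn2 := gaussBinom_nonneg Q hQ1.le (s - 1) i
      have hC : (0:ℝ) < (Q - 1) / (Q - 2) := by apply div_pos <;> linarith
      have hCg : (Q - 1) / (Q - 2) ≤ gammaQ q := gammaQ_ge q hq
      set a : ℤ := (s - 1 - i) * (s - i)
      set b : ℤ := (s - i) * ((d - 2*(2*s) + 1) - (s - i))
      set c : ℤ := i * ((s - 1) - i)
      have hexp : a + b + c ≤ e1 + (-2) * (i - 1) := by
        have hident : e1 + (-2) * (i - 1) - (a + b + c)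
            = (i - 1) * (d - 5*s) + i * (i - 1) := by
          rw [he1]; ring
        nlinarith [mul_nonneg (by omega : (0:ℤ) ≤ i - 1) (by omega : (0:ℤ) ≤ d - 5*s),
          mul_nonneg (by omega : (0:ℤ) ≤ i) (by omega : (0:ℤ) ≤ i - 1)]
      calc Q ^ a * gaussBinom Q (d - 2*(2*s) + 1) (s - i) * gaussBinom Q (s - 1) i
          ≤ Q ^ a * ((Q - 1)/(Q - 2) * Q ^ b) * ((Q - 1)/(Q - 2) * Q ^ c) := by
            refine mul_le_mul ?_ hb2 hn2 (by positivity)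
            exact mul_le_mul_of_nonneg_left hb1 (zpow_nonneg hQ0.le _)
        _ = ((Q - 1)/(Q - 2))^2 * Q ^ (a + b + c) := by
            rw [zpow_add₀ hQ0.ne', zpow_add₀ hQ0.ne']; ring
        _ ≤ gammaQ q ^ 2 * Q ^ (e1 + (-2) * (i - 1)) := by
            refine mul_le_mul (pow_le_pow_left₀ hC.le hCg 2)
              (zpow_le_zpow_right₀ hQ1.le hexp) (zpow_nonneg hQ0.le _) (by positivity)
        _ = (gammaQ q ^ 2 * Q ^ e1) * (Q ^ (-2:ℤ)) ^ (i - 1) := by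
            rw [zpow_add₀ hQ0.ne', zpow_mul]; ring
    calc ∑ i ∈ Finset.Icc (1:ℤ) (s - 1),
        Q ^ ((s - 1 - i) * (s - i)) * gaussBinom Q (d - 2*(2*s) + 1) (s - i) *
          gaussBinom Q (s - 1) i
        ≤ ∑ i ∈ Finset.Icc (1:ℤ) (s - 1), (gammaQ q ^ 2 * Q ^ e1) * (Q ^ (-2:ℤ)) ^ (i - 1) :=
          Finset.sum_le_sum hterm
      _ = (gammaQ q ^ 2 * Q ^ e1) * ∑ i ∈ Finset.Icc (1:ℤ) (s - 1), (Q ^ (-2:ℤ)) ^ (i - 1) := by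
          rw [← Finset.mul_sum]
      _ ≤ (gammaQ q ^ 2 * Q ^ e1) * (1 / (1 - Q ^ (-2:ℤ))) := by
          refine mul_le_mul_of_nonneg_left (geom_le' _ hc hc1 (s - 1) (by omega)) ?_
          positivity
      _ = Q ^ e1 * gammaQ q ^ 2 / (1 - Q ^ (-2:ℤ)) := by ring
  rw [zpow_add₀ hQ0.ne' (3*s^2) e1]
  calc Q ^ (3*s^2:ℤ) * ∑ i ∈ Finset.Icc (1:ℤ) (s - 1),
      Q ^ ((s - 1 - i) * (s - i)) * gaussBinom Q (d - 2*(2*s) + 1) (s - i) *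
        gaussBinom Q (s - 1) i
      ≤ Q ^ (3*s^2:ℤ) * (Q ^ e1 * gammaQ q ^ 2 / (1 - Q ^ (-2:ℤ))) :=
        mul_le_mul_of_nonneg_left key (zpow_nonneg hQ0.le _)
    _ = Q ^ (3*s^2:ℤ) * Q ^ e1 * gammaQ q ^ 2 / (1 - Q ^ (-2:ℤ)) := by ring
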